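/- (Key telescoping lemma.) Let δ ∈ [0,1]. Then Σ_{j=1}^n ∫_0^δ ( f(A_j(ℓ_j,θ)) − f(A_{j−1}(ℓ_j,θ)) ) dθ ≥ ∫_0^δ f(A(θ)) dθ − δ f(∅), for any submodular f. -/
import Mathlib

open MeasureTheory

/-- A function of the form `θ ↦ f (S θ)` with `S` valued in subsets of a finite type,
where each `{θ | v ∈ S θ}` is measurable, is interval integrable. -/
lemma intervalIntegrable_comp_setFun {n : ℕ} (f : Set (Fin n) → ℝ) (S : ℝ → Set (Fin n))
    (hS : ∀ v, MeasurableSet {θ : ℝ | v ∈ S θ}) (a b : ℝ) :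
    IntervalIntegrable (fun θ => f (S θ)) volume a b := by
  letI : MeasurableSpace (Set (Fin n)) := ⊤
  have hSm : Measurable S := by
    apply measurable_to_countable'
    intro T
    have hpre : S ⁻¹' {T} = ⋂ v, {θ | v ∈ S θ ↔ v ∈ T} := by
      ext θ
      simp [Set.ext_iff]
    rw [hpre]
    refine MeasurableSet.iInter fun v => ?_
    by_cases hv : v ∈ T
    · have he : {θ | v ∈ S θ ↔ v ∈ T} = {θ : ℝ | v ∈ S θ} := by ext θ; simp [hv]
      rw [he]; exact hS v
    · have he : {θ | v ∈ S θ ↔ v ∈ T} = {θ : ℝ | v ∈ S θ}ᶜ := by ext θ; simp [hv]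
      rw [he]; exact (hS v).compl
  have hg : Measurable (fun θ => f (S θ)) := measurable_from_top.comp hSm
  obtain ⟨C, hC⟩ := Finite.exists_le (fun A : Set (Fin n) => ‖f A‖)
  constructor <;>
  · refine Integrable.mono' (g := fun _ => C) (integrable_const C) hg.aestronglyMeasurable ?_
    exact Filter.Eventually.of_forall fun θ => hC (S θ)



/-- Key telescoping lemma: for submodular `f` and `δ ∈ [0,1]`,
`Σ_{j=1}^n ∫_0^δ (f(A_j(ℓ_j,θ)) − f(A_{j−1}(ℓ_j,θ))) dθ ≥ ∫_0^δ f(A(θ)) dθ − δ f(∅)`.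
Vertices are `0`-indexed by `Fin n` and sorted by increasing `α_v = max_i x(v,i)`;
`ℓ v` attains the max. For the vertex with index `j : Fin n`, the prefix `V_j` is
`{v | v.val ≤ j.val}` and `V_{j-1} = {v | v.val < j.val}`;
`A_j(i,θ) = {v ∈ V_j | x(v,i) ≥ θ}` and `A(θ) = {v | ∃ i, x(v,i) ≥ θ}`. -/
theorem key_telescoping_lemma {n k : ℕ} (f : Set (Fin n) → ℝ)
    (hsub : ∀ A B : Set (Fin n), f A + f B ≥ f (A ∩ B) + f (A ∪ B))
    (x : Fin n → Fin k → ℝ)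
    (hx0 : ∀ v i, 0 ≤ x v i) (hxsum : ∀ v, ∑ i, x v i = 1)
    (ℓ : Fin n → Fin k) (hℓ : ∀ v i, x v i ≤ x v (ℓ v))
    (hsorted : ∀ v w : Fin n, v ≤ w → x v (ℓ v) ≤ x w (ℓ w))
    (δ : ℝ) (hδ : δ ∈ Set.Icc (0:ℝ) 1) :
    ∑ j : Fin n,
        ∫ θ in (0:ℝ)..δ,
          (f {v : Fin n | v.val ≤ j.val ∧ θ ≤ x v (ℓ j)}
            - f {v : Fin n | v.val < j.val ∧ θ ≤ x v (ℓ j)}) ≥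
      (∫ θ in (0:ℝ)..δ, f {v : Fin n | ∃ i : Fin k, θ ≤ x v i})
        - δ * f (∅ : Set (Fin n)) := by
  -- `G m θ = f (A(θ) ∩ V_{m-1})`
  set G : ℕ → ℝ → ℝ := fun m θ => f {v : Fin n | v.val < m ∧ ∃ i : Fin k, θ ≤ x v i} with hG
  -- integrability facts
  have hintG : ∀ m : ℕ, IntervalIntegrable (G m) volume 0 δ := by
    intro m
    apply intervalIntegrable_comp_setFun f (fun θ => {v : Fin n | v.val < m ∧ ∃ i, θ ≤ x v i})
    intro v
    by_cases h : v.val < m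
    · have : {θ : ℝ | v ∈ {w : Fin n | w.val < m ∧ ∃ i, θ ≤ x w i}} = ⋃ i, Set.Iic (x v i) := by
        ext θ; simp only [Set.mem_setOf_eq, Set.mem_Iic, Set.mem_iUnion, Set.mem_empty_iff_false, iff_false]; tauto
      rw [this]
      exact MeasurableSet.iUnion fun i => measurableSet_Iic
    · have : {θ : ℝ | v ∈ {w : Fin n | w.val < m ∧ ∃ i, θ ≤ x w i}} = ∅ := by
        ext θ; simp only [Set.mem_setOf_eq, Set.mem_Iic, Set.mem_iUnion, Set.mem_empty_iff_false, iff_false]; tauto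
      rw [this]; exact MeasurableSet.empty
  have hintD1 : ∀ j : Fin n,
      IntervalIntegrable (fun θ => f {v : Fin n | v.val ≤ j.val ∧ θ ≤ x v (ℓ j)}) volume 0 δ := by
    intro j
    apply intervalIntegrable_comp_setFun f (fun θ => {v : Fin n | v.val ≤ j.val ∧ θ ≤ x v (ℓ j)})
    intro v
    by_cases h : v.val ≤ j.val
    · have : {θ : ℝ | v ∈ {w : Fin n | w.val ≤ j.val ∧ θ ≤ x w (ℓ j)}} = Set.Iic (x v (ℓ j)) := by
        ext θ; simp only [Set.mem_setOf_eq, Set.mem_Iic, Set.mem_iUnion, Set.mem_empty_iff_false, iff_false]; tauto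
      rw [this]; exact measurableSet_Iic
    · have : {θ : ℝ | v ∈ {w : Fin n | w.val ≤ j.val ∧ θ ≤ x w (ℓ j)}} = ∅ := by
        ext θ; simp only [Set.mem_setOf_eq, Set.mem_Iic, Set.mem_iUnion, Set.mem_empty_iff_false, iff_false]; tauto
      rw [this]; exact MeasurableSet.empty
  have hintD2 : ∀ j : Fin n,
      IntervalIntegrable (fun θ => f {v : Fin n | v.val < j.val ∧ θ ≤ x v (ℓ j)}) volume 0 δ := by
    intro j
    apply intervalIntegrable_comp_setFun f (fun θ => {v : Fin n | v.val < j.val ∧ θ ≤ x v (ℓ j)})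
    intro v
    by_cases h : v.val < j.val
    · have : {θ : ℝ | v ∈ {w : Fin n | w.val < j.val ∧ θ ≤ x w (ℓ j)}} = Set.Iic (x v (ℓ j)) := by
        ext θ; simp only [Set.mem_setOf_eq, Set.mem_Iic, Set.mem_iUnion, Set.mem_empty_iff_false, iff_false]; tauto
      rw [this]; exact measurableSet_Iic
    · have : {θ : ℝ | v ∈ {w : Fin n | w.val < j.val ∧ θ ≤ x w (ℓ j)}} = ∅ := by
        ext θ; simp only [Set.mem_setOf_eq, Set.mem_Iic, Set.mem_iUnion, Set.mem_empty_iff_false, iff_false]; tauto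
      rw [this]; exact MeasurableSet.empty
  -- pointwise submodularity inequality
  have key : ∀ (j : Fin n) (θ : ℝ),
      G (j.val + 1) θ - G j.val θ ≤
        f {v : Fin n | v.val ≤ j.val ∧ θ ≤ x v (ℓ j)}
          - f {v : Fin n | v.val < j.val ∧ θ ≤ x v (ℓ j)} := by
    intro j θ
    have h := hsub {v : Fin n | v.val ≤ j.val ∧ θ ≤ x v (ℓ j)}
      {v : Fin n | v.val < j.val ∧ ∃ i : Fin k, θ ≤ x v i}
    have hcap : {v : Fin n | v.val ≤ j.val ∧ θ ≤ x v (ℓ j)} ∩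
        {v : Fin n | v.val < j.val ∧ ∃ i : Fin k, θ ≤ x v i}
        = {v : Fin n | v.val < j.val ∧ θ ≤ x v (ℓ j)} := by
      ext v
      simp only [Set.mem_inter_iff, Set.mem_setOf_eq]
      constructor
      · rintro ⟨⟨-, h2⟩, ⟨h3, -⟩⟩; exact ⟨h3, h2⟩
      · rintro ⟨h1, h2⟩; exact ⟨⟨le_of_lt h1, h2⟩, h1, ⟨ℓ j, h2⟩⟩
    have hcup : {v : Fin n | v.val ≤ j.val ∧ θ ≤ x v (ℓ j)} ∪
        {v : Fin n | v.val < j.val ∧ ∃ i : Fin k, θ ≤ x v i}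
        = {v : Fin n | v.val < j.val + 1 ∧ ∃ i : Fin k, θ ≤ x v i} := by
      ext v
      simp only [Set.mem_union, Set.mem_setOf_eq]
      constructor
      · rintro (⟨h1, h2⟩ | ⟨h1, h2⟩)
        · exact ⟨Nat.lt_succ_of_le h1, ⟨ℓ j, h2⟩⟩
        · exact ⟨Nat.lt_succ_of_lt h1, h2⟩
      · rintro ⟨h1, i, h2⟩
        rcases lt_or_eq_of_le (Nat.lt_succ_iff.mp h1) with hlt | heq
        · exact Or.inr ⟨hlt, ⟨i, h2⟩⟩
        · have hvj : v = j := Fin.ext heq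
          subst hvj
          exact Or.inl ⟨le_refl _, le_trans h2 (hℓ v i)⟩
    rw [hcap, hcup] at h
    simp only [hG]
    linarith
  -- per-j integral inequality
  have step : ∀ j : Fin n,
      (∫ θ in (0:ℝ)..δ, G (j.val + 1) θ) - ∫ θ in (0:ℝ)..δ, G j.val θ ≤
        ∫ θ in (0:ℝ)..δ,
          (f {v : Fin n | v.val ≤ j.val ∧ θ ≤ x v (ℓ j)}
            - f {v : Fin n | v.val < j.val ∧ θ ≤ x v (ℓ j)}) := by
    intro j
    rw [← intervalIntegral.integral_sub (hintG (j.val + 1)) (hintG j.val)]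
    apply intervalIntegral.integral_mono hδ.1
      ((hintG (j.val + 1)).sub (hintG j.val))
      ((hintD1 j).sub (hintD2 j))
    intro θ
    exact key j θ
  -- sum up
  have hsum : ∑ j : Fin n,
      ((∫ θ in (0:ℝ)..δ, G (j.val + 1) θ) - ∫ θ in (0:ℝ)..δ, G j.val θ)
      = (∫ θ in (0:ℝ)..δ, G n θ) - ∫ θ in (0:ℝ)..δ, G 0 θ := by
    rw [Fin.sum_univ_eq_sum_range
      (fun m => (∫ θ in (0:ℝ)..δ, G (m + 1) θ) - ∫ θ in (0:ℝ)..δ, G m θ) n]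
    exact Finset.sum_range_sub (fun m => ∫ θ in (0:ℝ)..δ, G m θ) n
  have hGn : (∫ θ in (0:ℝ)..δ, G n θ)
      = ∫ θ in (0:ℝ)..δ, f {v : Fin n | ∃ i : Fin k, θ ≤ x v i} := by
    apply intervalIntegral.integral_congr
    intro θ _
    simp only [hG]
    congr 1
    ext v
    simp [v.isLt]
  have hG0 : (∫ θ in (0:ℝ)..δ, G 0 θ) = δ * f (∅ : Set (Fin n)) := by
    have : ∀ θ : ℝ, G 0 θ = f (∅ : Set (Fin n)) := by
      intro θ
      simp only [hG]
      congr 1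
      ext v
      simp
    calc (∫ θ in (0:ℝ)..δ, G 0 θ) = ∫ _ in (0:ℝ)..δ, f (∅ : Set (Fin n)) := by
          simp [this]
      _ = δ * f (∅ : Set (Fin n)) := by simp [mul_comm]
  calc ∑ j : Fin n,
        ∫ θ in (0:ℝ)..δ,
          (f {v : Fin n | v.val ≤ j.val ∧ θ ≤ x v (ℓ j)}
            - f {v : Fin n | v.val < j.val ∧ θ ≤ x v (ℓ j)})
      ≥ ∑ j : Fin n,
        ((∫ θ in (0:ℝ)..δ, G (j.val + 1) θ) - ∫ θ in (0:ℝ)..δ, G j.val θ) :=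
        Finset.sum_le_sum fun j _ => step j
    _ = (∫ θ in (0:ℝ)..δ, G n θ) - ∫ θ in (0:ℝ)..δ, G 0 θ := hsum
    _ = (∫ θ in (0:ℝ)..δ, f {v : Fin n | ∃ i : Fin k, θ ≤ x v i})
        - δ * f (∅ : Set (Fin n)) := by rw [hGn, hG0]
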